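/- The width of the quasi-order T_f(2) of finite leaf-labelled trees over the two-element chain 0 < 1, ordered by tree homomorphisms, satisfies w(T_f(2)) ≥ ω + 1. -/

import Mathlib

universe u v

open Ordinal

/-- Incomparability in a quasi-order. -/
def IncompRelQO {Q : Type u} (le : Q → Q → Prop) (x y : Q) : Prop :=
  ¬ le x y ∧ ¬ le y x

/-- One step in building finite antichain sequences: `a` extends `b` by one element
incomparable with every element of `b`. -/
def WidthStep {Q : Type u} (le : Q → Q → Prop) (a b : List Q) : Prop :=
  ∃ x : Q, (∀ y ∈ b, IncompRelQO le x y) ∧ a = b ++ [x]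

open Classical in
/-- The width of a wqo, given by the recursion `w(Q) = sup_{x ∈ Q} (w(L_⊥(x)) + 1)`:
it is the rank of `[]` in the well-founded tree of finite antichain sequences, where the
rank of an antichain sequence `l` is `sup (rank (l ++ [x]) + 1)` over all `x`
incomparable with every element of `l` (the elements incomparable with all of `l` being
exactly the current suborder `L_⊥`). -/
noncomputable def widthQO {Q : Type u} (le : Q → Q → Prop) : Ordinal.{u} :=
  if h : WellFounded (WidthStep le) then (h.apply ([] : List Q)).rank else 0

/-- Finite leaf-labelled trees over `Q`: leaves carry labels from `Q`, and an internal
node carries a finite nonempty list of children (encoded as a head child plus the list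
of remaining children). -/
inductive LTree (Q : Type u) : Type u
  | leaf : Q → LTree Q
  | node : LTree Q → List (LTree Q) → LTree Q

mutual
/-- The tree-homomorphism quasi-order `≤_T` on finite leaf-labelled trees:
`·x ≤_T ·y` iff `le x y`; `·x ≤_T ·(τ₀,…,τ_{l-1})` iff `·x ≤_T τ_j` for some `j < l`;
`·(σ₀,…,σ_{k-1}) ≤_T ·(τ₀,…,τ_{l-1})` iff for every `i < k` there is `j < l` with
`σᵢ ≤_T τ_j`; and `·(σ₀,…,σ_{k-1}) ≤_T ·y` never holds. -/
inductive TreeLE {Q : Type u} (le : Q → Q → Prop) : LTree Q → LTree Q → Prop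
  | leaf {x y : Q} : le x y → TreeLE le (.leaf x) (.leaf y)
  | leafNode {x : Q} {t : LTree Q} {ts : List (LTree Q)} :
      TreeMemLE le (.leaf x) (t :: ts) → TreeLE le (.leaf x) (.node t ts)
  | node {s t : LTree Q} {ss ts : List (LTree Q)} :
      TreeAllLE le (s :: ss) (t :: ts) → TreeLE le (.node s ss) (.node t ts)

/-- `TreeMemLE le a l` means `∃ b ∈ l, TreeLE le a b`. -/
inductive TreeMemLE {Q : Type u} (le : Q → Q → Prop) : LTree Q → List (LTree Q) → Prop
  | head {a b : LTree Q} {l : List (LTree Q)} : TreeLE le a b → TreeMemLE le a (b :: l)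
  | tail {a b : LTree Q} {l : List (LTree Q)} : TreeMemLE le a l → TreeMemLE le a (b :: l)

/-- `TreeAllLE le l₁ l₂` means `∀ a ∈ l₁, ∃ b ∈ l₂, TreeLE le a b`. -/
inductive TreeAllLE {Q : Type u} (le : Q → Q → Prop) : List (LTree Q) → List (LTree Q) → Prop
  | nil {l : List (LTree Q)} : TreeAllLE le [] l
  | cons {a : LTree Q} {l₁ l₂ : List (LTree Q)} :
      TreeMemLE le a l₂ → TreeAllLE le l₁ l₂ → TreeAllLE le (a :: l₁) l₂
end

/-!
`T_f(Q)` is a wqo whenever `Q` is (Nash-Williams' minimal bad sequence argument, with Higman's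
lemma for the lists of children), so the tree of finite antichain sequences is well founded and
the width is the rank of `[]` in it. It therefore suffices to find one tree `x` together with
antichains of every finite length all of whose members are incomparable with `x`: then `[x]` has
rank at least `ω`, and `[]` rank at least `ω + 1`.

In `T_f(2)` write `gₙ`, `hₙ` for the chains of height `n` over a leaf `0` and `1`, and take
`x = h₅`. With `fork = ·(1, g₂)`, the trees `gridTree k m = ·(·(h₂, g_{k+4}), ·(fork, g_{m+4}))`
embed `ℕ × ℕ` with the product order: `h₂` and `fork` are incomparable and keep the two arms apart,
while the chains of zeros are too deep to fit under anything but each other. Hence the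
antidiagonal `k + m = n` is an antichain of size `n`, and none of its members is comparable
with `x`.
-/

theorem List.SublistForall₂.exists_rel_of_mem {α β : Type*} {R : α → β → Prop}
    {l₁ : List α} {l₂ : List β} (h : List.SublistForall₂ R l₁ l₂) :
    ∀ a ∈ l₁, ∃ b ∈ l₂, R a b := by
  induction h with
  | nil => simp
  | cons hab _ ih =>
    refine List.forall_mem_cons.2 ⟨⟨_, List.mem_cons_self, hab⟩, fun a ha => ?_⟩
    obtain ⟨b, hb, hab⟩ := ih a ha
    exact ⟨b, List.mem_cons_of_mem _ hb, hab⟩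
  | cons_right _ ih =>
    intro a ha
    obtain ⟨b, hb, hab⟩ := ih a ha
    exact ⟨b, List.mem_cons_of_mem _ hb, hab⟩

namespace LTree

variable {Q : Type u} {le : Q → Q → Prop}

theorem treeMemLE_iff {a : LTree Q} {l : List (LTree Q)} :
    TreeMemLE le a l ↔ ∃ b ∈ l, TreeLE le a b := by
  induction l with
  | nil => exact ⟨nofun, by simp⟩
  | cons b l ih =>
    rw [List.exists_mem_cons_iff, ← ih]
    exact ⟨fun | .head h => .inl h | .tail h => .inr h, fun h => h.elim .head .tail⟩

theorem treeAllLE_iff {l₁ l₂ : List (LTree Q)} :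
    TreeAllLE le l₁ l₂ ↔ ∀ a ∈ l₁, ∃ b ∈ l₂, TreeLE le a b := by
  induction l₁ with
  | nil => exact ⟨fun _ => by simp, fun _ => .nil⟩
  | cons a l ih =>
    rw [List.forall_mem_cons, ← ih, ← treeMemLE_iff]
    exact ⟨fun | .cons h h' => ⟨h, h'⟩, fun h => .cons h.1 h.2⟩

theorem leaf_le_leaf_iff {x y : Q} : TreeLE le (leaf x) (leaf y) ↔ le x y :=
  ⟨fun | .leaf h => h, .leaf⟩

theorem leaf_le_node_iff {x : Q} {t : LTree Q} {ts : List (LTree Q)} :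
    TreeLE le (leaf x) (node t ts) ↔ ∃ b ∈ t :: ts, TreeLE le (leaf x) b :=
  ⟨fun | .leafNode h => treeMemLE_iff.1 h, fun h => .leafNode (treeMemLE_iff.2 h)⟩

theorem node_le_node_iff {s t : LTree Q} {ss ts : List (LTree Q)} :
    TreeLE le (node s ss) (node t ts) ↔ ∀ a ∈ s :: ss, ∃ b ∈ t :: ts, TreeLE le a b :=
  ⟨fun | .node h => treeAllLE_iff.1 h, fun h => .node (treeAllLE_iff.2 h)⟩

theorem not_node_le_leaf {s : LTree Q} {ss : List (LTree Q)} {y : Q} :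
    ¬ TreeLE le (node s ss) (leaf y) := nofun

theorem sizeOf_lt_of_mem {t c : LTree Q} {cs : List (LTree Q)} (h : t ∈ c :: cs) :
    sizeOf t < sizeOf (node c cs) := by
  simpa using List.sizeOf_lt_of_mem h

theorem treeLE_refl [Std.Refl le] : ∀ t : LTree Q, TreeLE le t t
  | leaf x => .leaf (refl x)
  | node c cs => node_le_node_iff.2 fun a ha =>
    have := sizeOf_lt_of_mem ha
    ⟨a, ha, treeLE_refl a⟩
termination_by t => sizeOf t

theorem treeLE_trans [IsTrans Q le] :
    ∀ {a b c : LTree Q}, TreeLE le a b → TreeLE le b c → TreeLE le a c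
  | leaf _, leaf _, leaf _, hab, hbc =>
    .leaf (_root_.trans (leaf_le_leaf_iff.1 hab) (leaf_le_leaf_iff.1 hbc))
  | _, node _ _, leaf _, _, hbc => absurd hbc not_node_le_leaf
  | node _ _, leaf _, _, hab, _ => absurd hab not_node_le_leaf
  | leaf _, leaf _, node _ _, hab, hbc => by
    obtain ⟨v, hv, hyv⟩ := leaf_le_node_iff.1 hbc
    have := sizeOf_lt_of_mem hv
    exact leaf_le_node_iff.2 ⟨v, hv, treeLE_trans hab hyv⟩
  | leaf _, node _ _, node _ _, hab, hbc => by
    obtain ⟨w, hw, hxw⟩ := leaf_le_node_iff.1 hab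
    obtain ⟨v, hv, hwv⟩ := node_le_node_iff.1 hbc w hw
    have := sizeOf_lt_of_mem hv
    exact leaf_le_node_iff.2 ⟨v, hv, treeLE_trans hxw hwv⟩
  | node _ _, node _ _, node _ _, hab, hbc => node_le_node_iff.2 fun p hp => by
    obtain ⟨w, hw, hpw⟩ := node_le_node_iff.1 hab p hp
    obtain ⟨v, hv, hwv⟩ := node_le_node_iff.1 hbc w hw
    have := sizeOf_lt_of_mem hv
    exact ⟨v, hv, treeLE_trans hpw hwv⟩
termination_by _ _ c => sizeOf c

instance [Std.Refl le] : Std.Refl (TreeLE le) := ⟨treeLE_refl⟩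

instance [IsTrans Q le] : IsTrans (LTree Q) (TreeLE le) := ⟨fun _ _ _ => treeLE_trans⟩

instance [IsPreorder Q le] : IsPreorder (LTree Q) (TreeLE le) where

theorem le_node_of_mem [Std.Refl le] {c : LTree Q} {cs : List (LTree Q)} :
    ∀ {t : LTree Q}, t ∈ c :: cs → TreeLE le t (node c cs)
  | leaf _, h => leaf_le_node_iff.2 ⟨_, h, treeLE_refl _⟩
  | node s ss, h => node_le_node_iff.2 fun a ha =>
    have := sizeOf_lt_of_mem ha
    ⟨node s ss, h, le_node_of_mem ha⟩
termination_by t => sizeOf t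

def chain (x : Q) : ℕ → LTree Q
  | 0 => leaf x
  | k + 1 => node (chain x k) []

theorem chain_succ_le_node_iff {x : Q} {k : ℕ} {t : LTree Q} {ts : List (LTree Q)} :
    TreeLE le (chain x (k + 1)) (node t ts) ↔ ∃ b ∈ t :: ts, TreeLE le (chain x k) b := by
  simp [chain, node_le_node_iff]

theorem node_le_chain_succ_iff {y : Q} {j : ℕ} {s : LTree Q} {ss : List (LTree Q)} :
    TreeLE le (node s ss) (chain y (j + 1)) ↔ ∀ a ∈ s :: ss, TreeLE le a (chain y j) := by
  simp [chain, node_le_node_iff]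

@[simp]
theorem chain_le_chain_iff {x y : Q} {k j : ℕ} :
    TreeLE le (chain x k) (chain y j) ↔ k ≤ j ∧ le x y := by
  induction k generalizing j with
  | zero =>
    induction j with
    | zero => simp [chain, leaf_le_leaf_iff]
    | succ j ih => simpa [chain, leaf_le_node_iff] using ih
  | succ k ih =>
    cases j with
    | zero => simp [chain, not_node_le_leaf]
    | succ j => simp [chain, node_le_node_iff, ih]

open Set Set.PartiallyWellOrderedOn

theorem partiallyWellOrderedOn_leaves (h : WellQuasiOrdered le) :
    (range (leaf : Q → LTree Q)).PartiallyWellOrderedOn (TreeLE le) := by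
  rw [← image_univ]
  exact (partiallyWellOrderedOn_univ_iff.2 h).image_of_monotone_on fun _ _ _ _ => .leaf

theorem partiallyWellOrderedOn_nodes [IsPreorder Q le] {S : Set (LTree Q)}
    (hS : S.PartiallyWellOrderedOn (TreeLE le)) :
    {t | ∃ c cs, t = node c cs ∧ ∀ s ∈ c :: cs, s ∈ S}.PartiallyWellOrderedOn (TreeLE le) := by
  rw [partiallyWellOrderedOn_iff_exists_lt]
  intro f hf
  choose c cs hfcs hS' using hf
  obtain ⟨i, j, hij, hle⟩ := (hS.partiallyWellOrderedOn_sublistForall₂ (TreeLE le)).exists_lt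
    (f := fun n => c n :: cs n) hS'
  refine ⟨i, j, hij, ?_⟩
  rw [hfcs i, hfcs j]
  exact node_le_node_iff.2 hle.exists_rel_of_mem

theorem partiallyWellOrderedOn_children_of_isMinBadSeq [IsPreorder Q le] {f : ℕ → LTree Q}
    (hf : IsBadSeq (TreeLE le) univ f) (hmin : ∀ n, IsMinBadSeq (TreeLE le) sizeOf univ n f) :
    {t | ∃ n c cs, f n = node c cs ∧ t ∈ c :: cs}.PartiallyWellOrderedOn (TreeLE le) := by
  rw [iff_forall_not_isBadSeq]
  rintro g ⟨hgS, hg⟩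
  choose idx c cs hfidx hmem using hgS
  have hg_le_f : ∀ k, TreeLE le (g k) (f (idx k)) := fun k => hfidx k ▸ le_node_of_mem (hmem k)
  obtain ⟨k, hk⟩ : ∃ k, ∀ m, idx k ≤ idx m := ⟨_, fun m => Function.argmin_le idx m⟩
  -- Splicing `g` into `f` at `idx k` gives a bad sequence which is smaller than `f` there.
  let f' i := if i < idx k then f i else g (k + (i - idx k))
  refine hmin (idx k) f' (fun m hm => (if_pos hm).symm) ?_ ⟨fun _ => trivial, ?_⟩
  · simpa [f', hfidx] using sizeOf_lt_of_mem (hmem k)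
  intro i j hij hle
  by_cases hj : j < idx k
  · simp only [f', if_pos hj, if_pos (hij.trans hj)] at hle
    exact hf.2 i j hij hle
  by_cases hi : i < idx k
  · simp only [f', if_pos hi, if_neg hj] at hle
    exact hf.2 i _ (hi.trans_le (hk _)) (_root_.trans hle (hg_le_f _))
  · simp only [f', if_neg hi, if_neg hj] at hle
    exact hg _ _ (by omega) hle

theorem wellQuasiOrdered_treeLE [IsPreorder Q le] (h : WellQuasiOrdered le) :
    WellQuasiOrdered (TreeLE le) := by
  rw [← partiallyWellOrderedOn_univ_iff, iff_not_exists_isMinBadSeq sizeOf]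
  rintro ⟨f, hf, hmin⟩
  set S := {t | ∃ n c cs, f n = node c cs ∧ t ∈ c :: cs}
  have hS : S.PartiallyWellOrderedOn (TreeLE le) :=
    partiallyWellOrderedOn_children_of_isMinBadSeq hf hmin
  have hrange : range f ⊆ range leaf ∪ {t | ∃ c cs, t = node c cs ∧ ∀ s ∈ c :: cs, s ∈ S} := by
    rintro _ ⟨n, rfl⟩
    cases hfn : f n with
    | leaf x => exact .inl ⟨x, rfl⟩
    | node c cs => exact .inr ⟨c, cs, rfl, fun s hs => ⟨n, c, cs, hfn, hs⟩⟩
  obtain ⟨i, j, hij, hle⟩ := ((partiallyWellOrderedOn_leaves h).union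
    (partiallyWellOrderedOn_nodes hS)).mono hrange |>.exists_lt (f := f) (fun n => ⟨n, rfl⟩)
  exact hf.2 i j hij hle

end LTree

section Width

variable {Q : Type u} {le : Q → Q → Prop}

theorem IncompRelQO.symm {x y : Q} (h : IncompRelQO le x y) : IncompRelQO le y x :=
  ⟨h.2, h.1⟩

theorem wellFounded_widthStep (h : WellQuasiOrdered le) : WellFounded (WidthStep le) := by
  rw [wellFounded_iff_isEmpty_descending_chain]
  refine ⟨fun ⟨l, hl⟩ => ?_⟩
  choose x hx hlx using hl
  have hmem : ∀ i j, i < j → x i ∈ l j := by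
    intro i j hij
    induction j, hij using Nat.le_induction with
    | base => simp [hlx i]
    | succ j _ ih => simp [hlx j, ih]
  obtain ⟨i, j, hij, hle⟩ := h x
  exact (hx j (x i) (hmem i j hij)).2 hle

theorem length_le_rank_of_pairwise (hwf : WellFounded (WidthStep le)) :
    ∀ {l ys : List Q}, (l ++ ys).Pairwise (IncompRelQO le) →
      (ys.length : Ordinal) ≤ (hwf.apply l).rank
  | _, [], _ => by simp
  | l, y :: ys, h => by
    have hstep : WidthStep le (l ++ [y]) l :=
      ⟨y, fun z hz => (List.pairwise_append.1 h).2.2 z hz y List.mem_cons_self |>.symm, rfl⟩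
    have hys := length_le_rank_of_pairwise hwf (l := l ++ [y]) (ys := ys) (by simpa using h)
    rw [List.length_cons, Nat.cast_succ, Order.add_one_le_iff]
    exact hys.trans_lt (Acc.rank_lt_of_rel _ hstep)

theorem omega0_add_one_le_widthQO (hwf : WellFounded (WidthStep le)) (x : Q)
    (h : ∀ n : ℕ, ∃ ys : List Q, ys.length = n ∧ (x :: ys).Pairwise (IncompRelQO le)) :
    omega0 + 1 ≤ widthQO le := by
  rw [widthQO, dif_pos hwf]
  have hω : omega0 ≤ (hwf.apply [x]).rank := omega0_le.2 fun n => by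
    obtain ⟨ys, rfl, hys⟩ := h n
    exact length_le_rank_of_pairwise hwf hys
  have hstep : WidthStep le [x] [] := ⟨x, by simp, rfl⟩
  exact (add_le_add_left hω 1).trans (Order.add_one_le_iff.2 (Acc.rank_lt_of_rel _ hstep))

end Width

namespace LTree

def fork : LTree Bool := node (chain true 0) [chain false 2]

def trueArm (k : ℕ) : LTree Bool := node (chain true 2) [chain false (k + 4)]

def forkArm (k : ℕ) : LTree Bool := node fork [chain false (k + 4)]

def gridTree (k m : ℕ) : LTree Bool := node (trueArm k) [forkArm m]

local infix:50 " ≼ " => TreeLE ((· ≤ ·) : Bool → Bool → Prop)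

theorem trueArm_le_trueArm_iff {k j : ℕ} : trueArm k ≼ trueArm j ↔ k ≤ j := by
  simp [trueArm, node_le_node_iff]

theorem forkArm_le_forkArm_iff {k j : ℕ} : forkArm k ≼ forkArm j ↔ k ≤ j := by
  simp [forkArm, fork, node_le_node_iff, chain_succ_le_node_iff, treeLE_refl]

theorem not_trueArm_le_forkArm {k j : ℕ} : ¬ trueArm k ≼ forkArm j := by
  simp [trueArm, forkArm, fork, node_le_node_iff, chain_succ_le_node_iff]

theorem not_forkArm_le_trueArm {k j : ℕ} : ¬ forkArm k ≼ trueArm j := by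
  simp [trueArm, forkArm, fork, node_le_node_iff, node_le_chain_succ_iff]

theorem gridTree_le_gridTree_iff {k m k' m' : ℕ} :
    gridTree k m ≼ gridTree k' m' ↔ k ≤ k' ∧ m ≤ m' := by
  simp [gridTree, node_le_node_iff, trueArm_le_trueArm_iff, forkArm_le_forkArm_iff,
    not_trueArm_le_forkArm, not_forkArm_le_trueArm]

theorem not_chain_le_gridTree {k m : ℕ} : ¬ chain true 5 ≼ gridTree k m := by
  simp [gridTree, trueArm, forkArm, fork, chain_succ_le_node_iff]

theorem not_gridTree_le_chain {k m : ℕ} : ¬ gridTree k m ≼ chain true 5 := by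
  simp [gridTree, trueArm, node_le_chain_succ_iff]

theorem exists_antichain_incomp_chain (n : ℕ) :
    ∃ ys : List (LTree Bool), ys.length = n ∧
      (chain true 5 :: ys).Pairwise (IncompRelQO (TreeLE ((· ≤ ·) : Bool → Bool → Prop))) := by
  refine ⟨(List.range n).map fun k => gridTree k (n - k), by simp, ?_⟩
  rw [List.pairwise_cons, List.pairwise_map]
  refine ⟨?_, List.pairwise_lt_range.imp_of_mem fun ha hb hab => ?_⟩
  · simp only [List.mem_map, List.mem_range, forall_exists_index, and_imp]
    rintro _ k - rfl
    exact ⟨not_chain_le_gridTree, not_gridTree_le_chain⟩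
  · rw [List.mem_range] at ha hb
    simp only [IncompRelQO, gridTree_le_gridTree_iff]
    omega

end LTree

/-- The width of the quasi-order `T_f(2)` of finite leaf-labelled trees over the
two-element chain `false < true`, ordered by tree homomorphisms, is at least `ω + 1`. -/
theorem omega0_add_one_le_width_treeLE_bool :
    omega0 + 1 ≤ widthQO (TreeLE ((· ≤ ·) : Bool → Bool → Prop)) :=
  omega0_add_one_le_widthQO
    (wellFounded_widthStep (LTree.wellQuasiOrdered_treeLE (Finite.to_wellQuasiOrderedLE.wqo)))
    (LTree.chain true 5) LTree.exists_antichain_incomp_chain
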